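/- With E(n,k)(a,b;c0,c∞) defined by its GKP recurrence, if b ≠ 0 then for all 0 ≤ k ≤ n: b^k·k!·E(n,k)(a,b;c0,c∞) = Σ_{j=0}^{k} (-1)^{k-j}·C(k,j)·(bn+c0+c∞)^{↓(k−j),b}·(c0+c∞)^{↑j,b}·(bj+c0)^{↓n,a}, where (y)^{↓m,b} = y(y−b)···(y−(m−1)b) and (y)^{↑m,b} = y(y+b)···(y+(m−1)b). -/

import Mathlib

open Finset

/-- Generalized Eulerian numbers E(n,k)(a,b;c0,c∞). -/
def gE (a b c0 ci : ℚ) : ℕ → ℕ → ℚ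
  | 0, 0 => 1
  | 0, _+1 => 0
  | n+1, 0 => (-a * n + c0) * gE a b c0 ci n 0
  | n+1, k+1 => (-a * n + b * (k+1) + c0) * gE a b c0 ci n (k+1)
      + ((a+b) * n - b * k + ci) * gE a b c0 ci n k

private def Sfun (a b c0 ci : ℚ) (n k : ℕ) : ℚ :=
  ∑ j ∈ Finset.range (k+1), (-1 : ℚ)^(k-j) * (Nat.choose k j : ℚ) *
    (∏ i ∈ Finset.range (k-j), (b * (n : ℚ) + c0 + ci - (i : ℚ) * b)) *
    (∏ i ∈ Finset.range j, (c0 + ci + (i : ℚ) * b)) *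
    ∏ i ∈ Finset.range n, (b * (j : ℚ) + c0 - (i : ℚ) * a)

/-- Key step for the base case: the alternating falling/rising sum recurrence. -/
private lemma Gstep (y b : ℚ) (k : ℕ) :
    (∑ j ∈ range (k+1+1), (-1 : ℚ)^(k+1-j) * (Nat.choose (k+1) j : ℚ) *
      (∏ i ∈ range (k+1-j), (y - (i : ℚ) * b)) * (∏ i ∈ range j, (y + (i : ℚ) * b)))
    = b * k * ∑ j ∈ range (k+1), (-1 : ℚ)^(k-j) * (Nat.choose k j : ℚ) *
      (∏ i ∈ range (k-j), (y - (i : ℚ) * b)) * (∏ i ∈ range j, (y + (i : ℚ) * b)) := by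
  set D : ℕ → ℚ := fun m => ∏ i ∈ range m, (y - (i : ℚ) * b) with hDdef
  set U : ℕ → ℚ := fun m => ∏ i ∈ range m, (y + (i : ℚ) * b) with hUdef
  set e : ℕ → ℚ := fun j => (-1 : ℚ)^(k+1-j) * (Nat.choose k j : ℚ) * D (k+1-j) * U j with hedef
  rw [Finset.sum_range_succ']
  have h1 : ∀ j ∈ range (k+1),
      (-1 : ℚ)^(k+1-(j+1)) * (Nat.choose (k+1) (j+1) : ℚ) * D (k+1-(j+1)) * U (j+1)
      = ((-1 : ℚ)^(k-j) * (Nat.choose k j : ℚ) * D (k-j) * U j * (y + (j:ℚ)*b)) + e (j+1) := by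
    intro j hj
    have : k+1-(j+1) = k-j := by omega
    rw [this, Nat.choose_succ_succ]
    have hU : U (j+1) = U j * (y + (j:ℚ)*b) := Finset.prod_range_succ _ _
    simp only [hedef, Nat.succ_sub_succ, hU]
    push_cast
    ring
  rw [Finset.sum_congr rfl h1, Finset.sum_add_distrib]
  have h2 : (-1 : ℚ)^(k+1-0) * (Nat.choose (k+1) 0 : ℚ) * D (k+1-0) * U 0 = e 0 := by
    simp [hedef]
  rw [h2, add_assoc, ← Finset.sum_range_succ' e (k+1), Finset.sum_range_succ e (k+1)]
  have h3 : e (k+1) = 0 := by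
    simp [hedef, Nat.choose_succ_self]
  rw [h3, add_zero, ← Finset.sum_add_distrib, Finset.mul_sum]
  refine Finset.sum_congr rfl fun j hj => ?_
  have hjk : j ≤ k := by simpa [Nat.lt_succ_iff] using hj
  have hs : k+1-j = (k-j)+1 := by omega
  have hD : D ((k-j)+1) = D (k-j) * (y - ((k-j : ℕ):ℚ)*b) := Finset.prod_range_succ _ _
  have hc : ((k-j : ℕ) : ℚ) = (k : ℚ) - (j : ℚ) := by
    push_cast [Nat.cast_sub hjk]; ring
  simp only [hedef, hs, hD, hc, pow_succ]
  ring

private lemma Sfun_zero_succ (a b c0 ci : ℚ) (k : ℕ) : Sfun a b c0 ci 0 (k+1) = 0 := by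
  have key : ∀ m : ℕ, Sfun a b c0 ci 0 (m+1) = b * m * Sfun a b c0 ci 0 m := by
    intro m
    have := Gstep (c0 + ci) b m
    simpa [Sfun, add_comm, add_left_comm, add_assoc, sub_eq_add_neg] using this
  induction k with
  | zero => rw [key 0]; push_cast; ring
  | succ k ih => rw [key (k+1), ih, mul_zero]

private lemma Sfun_succ_zero (a b c0 ci : ℚ) (n : ℕ) :
    Sfun a b c0 ci (n+1) 0 = (-a * n + c0) * Sfun a b c0 ci n 0 := by
  simp [Sfun, Finset.prod_range_succ]
  ring

private lemma Sfun_rec (a b c0 ci : ℚ) (n k : ℕ) :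
    Sfun a b c0 ci (n+1) (k+1)
      = (-a * n + b * (k+1) + c0) * Sfun a b c0 ci n (k+1)
        + b * (k+1) * ((a+b) * n - b * k + ci) * Sfun a b c0 ci n k := by
  unfold Sfun
  -- extend the second sum to range (k+2): the j = k+1 term vanishes since choose k (k+1) = 0
  have hext : (∑ j ∈ range (k+1+1), (-1 : ℚ)^(k-j) * (Nat.choose k j : ℚ) *
        (∏ i ∈ range (k-j), (b * (n : ℚ) + c0 + ci - (i : ℚ) * b)) *
        (∏ i ∈ range j, (c0 + ci + (i : ℚ) * b)) *
        ∏ i ∈ range n, (b * (j : ℚ) + c0 - (i : ℚ) * a))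
      = ∑ j ∈ range (k+1), (-1 : ℚ)^(k-j) * (Nat.choose k j : ℚ) *
        (∏ i ∈ range (k-j), (b * (n : ℚ) + c0 + ci - (i : ℚ) * b)) *
        (∏ i ∈ range j, (c0 + ci + (i : ℚ) * b)) *
        ∏ i ∈ range n, (b * (j : ℚ) + c0 - (i : ℚ) * a) := by
    rw [Finset.sum_range_succ, Nat.choose_succ_self]
    push_cast; ring
  rw [← hext, Finset.mul_sum, Finset.mul_sum, ← Finset.sum_add_distrib]
  refine Finset.sum_congr rfl fun j hj => ?_
  have hjk1 : j ≤ k + 1 := by simpa [Nat.lt_succ_iff] using hj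
  have hR : (∏ i ∈ range (n+1), (b * (j : ℚ) + c0 - (i : ℚ) * a))
      = (∏ i ∈ range n, (b * (j : ℚ) + c0 - (i : ℚ) * a)) * (b * (j:ℚ) + c0 - (n:ℚ)*a) :=
    Finset.prod_range_succ _ _
  rcases Nat.lt_or_ge j (k+1) with hjlt | hjge
  · -- j ≤ k
    have hjk : j ≤ k := by omega
    have hs1 : k+1-j = (k-j)+1 := by omega
    -- P(n+1, (k-j)+1) = P(n, k-j) * (b*n + b + c0 + ci)
    have hP1 : (∏ i ∈ range ((k-j)+1), (b * ((n:ℚ)+1) + c0 + ci - (i : ℚ) * b))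
        = (∏ i ∈ range (k-j), (b * (n : ℚ) + c0 + ci - (i : ℚ) * b)) * (b * ((n:ℚ)+1) + c0 + ci) := by
      rw [Finset.prod_range_succ']
      have hcongr : ∀ i ∈ range (k-j), (b * ((n:ℚ)+1) + c0 + ci - ((i+1 : ℕ):ℚ) * b)
          = b * (n:ℚ) + c0 + ci - (i:ℚ) * b := fun i _ => by push_cast; ring
      rw [Finset.prod_congr rfl hcongr]
      norm_num
    have hP2 : (∏ i ∈ range ((k-j)+1), (b * (n:ℚ) + c0 + ci - (i : ℚ) * b))
        = (∏ i ∈ range (k-j), (b * (n : ℚ) + c0 + ci - (i : ℚ) * b)) *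
          (b * (n:ℚ) + c0 + ci - ((k-j : ℕ):ℚ) * b) := Finset.prod_range_succ _ _
    have hc : ((k-j : ℕ) : ℚ) = (k : ℚ) - (j : ℚ) := by
      push_cast [Nat.cast_sub hjk]; ring
    have hchoose : ((Nat.choose k j : ℚ)) * ((k:ℚ)+1) = (Nat.choose (k+1) j : ℚ) * ((k:ℚ)+1-(j:ℚ)) := by
      have := Nat.choose_mul_succ_eq k j
      have h := congrArg (Nat.cast : ℕ → ℚ) this
      push_cast [Nat.cast_sub hjk1] at h
      linarith [h]
    have hcast : ((n:ℚ)+1) = ((n+1 : ℕ) : ℚ) := by push_cast; ring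
    rw [hR, hs1]
    rw [show ((n+1 : ℕ) : ℚ) = (n:ℚ)+1 by push_cast; ring]
    rw [hP1, hP2, hc, pow_succ]
    linear_combination (-(-1:ℚ)^(k-j) * b * ((a+b)*(n:ℚ) - b*(k:ℚ) + ci) *
      (∏ i ∈ range (k-j), (b * (n : ℚ) + c0 + ci - (i : ℚ) * b)) *
      (∏ i ∈ range j, (c0 + ci + (i : ℚ) * b)) *
      (∏ i ∈ range n, (b * (j : ℚ) + c0 - (i : ℚ) * a))) * hchoose
  · -- j = k+1
    have hj1 : j = k+1 := by omega
    subst hj1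
    rw [hR]
    simp only [Nat.sub_self, Nat.choose_succ_self, Nat.choose_self]
    push_cast
    ring

private lemma gE_main (a b c0 ci : ℚ) :
    ∀ n k : ℕ, b^k * (Nat.factorial k : ℚ) * gE a b c0 ci n k = Sfun a b c0 ci n k := by
  intro n
  induction n with
  | zero =>
    intro k
    cases k with
    | zero => simp [gE, Sfun]
    | succ k => rw [Sfun_zero_succ]; simp [gE]
  | succ n ih =>
    intro k
    cases k with
    | zero =>
      rw [Sfun_succ_zero, ← ih 0]
      simp only [gE]
      ring
    | succ k =>
      rw [Sfun_rec, ← ih (k+1), ← ih k]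
      show b^(k+1) * (Nat.factorial (k+1) : ℚ) *
        ((-a * n + b * (k+1) + c0) * gE a b c0 ci n (k+1)
          + ((a+b) * n - b * k + ci) * gE a b c0 ci n k) = _
      rw [Nat.factorial_succ]
      push_cast
      ring

theorem gE_rank_one_formula (a b c0 ci : ℚ) (hb : b ≠ 0) (n k : ℕ) (hkn : k ≤ n) :
    b^k * (Nat.factorial k : ℚ) * gE a b c0 ci n k =
      ∑ j ∈ Finset.range (k+1), (-1 : ℚ)^(k-j) * (Nat.choose k j : ℚ) *
        (∏ i ∈ Finset.range (k-j), (b * (n : ℚ) + c0 + ci - (i : ℚ) * b)) *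
        (∏ i ∈ Finset.range j, (c0 + ci + (i : ℚ) * b)) *
        ∏ i ∈ Finset.range n, (b * (j : ℚ) + c0 - (i : ℚ) * a) :=
  gE_main a b c0 ci n k
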